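/- Let Γ be a finite simple graph with edge e = {v,w}, and let Γ' = Γ - e and Γ'' = Γ/e. The map β_e sending an acyclic orientation O of Γ to the restriction O' ∈ Acyc(Γ') if reversing e in O creates a directed cycle or if O orients e as (v,w) and reversing e keeps acyclicity, and to the contraction O'' ∈ Acyc(Γ'') if O orients e as (w,v) and reversing e keeps acyclicity, is a bijection from Acyc(Γ) onto Acyc(Γ') ⊔ Acyc(Γ''). In particular α(Γ) = α(Γ') + α(Γ''), where α counts acyclic orientations. -/

import Mathlib

variable {V : Type*}

/-- An acyclic orientation of a simple graph `G`. -/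
structure AcyclicOrientation (G : SimpleGraph V) where
  dir : V → V → Prop
  dir_adj : ∀ {a b : V}, dir a b → G.Adj a b
  total : ∀ {a b : V}, G.Adj a b → dir a b ∨ dir b a
  acyclic : ∀ a : V, ¬ Relation.TransGen dir a a

namespace AcyclicOrientation

variable {G : SimpleGraph V}

/-- `v` is a source: no edge points into `v`. -/
def IsSource (O : AcyclicOrientation G) (v : V) : Prop := ∀ a, ¬ O.dir a v

/-- `O'` is obtained from `O` by converting the source `v` into a sink. -/
def ClickAt (O : AcyclicOrientation G) (v : V) (O' : AcyclicOrientation G) : Prop :=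
  O.IsSource v ∧ ∀ a b, (O'.dir a b ↔ (((a = v ∨ b = v) ∧ O.dir b a) ∨ (a ≠ v ∧ b ≠ v ∧ O.dir a b)))

/-- One source-to-sink conversion relates `O` and `O'`. -/
def IsClick (O O' : AcyclicOrientation G) : Prop := ∃ v, O.ClickAt v O'

/-- Click-equivalence: reachability by a finite sequence of clicks. -/
def ClickEquiv (O O' : AcyclicOrientation G) : Prop :=
  Relation.ReflTransGen IsClick O O'

/-- `ClickSeq O c O'` : the list `c` is a click-sequence applicable to `O` with result `O'`. -/
inductive ClickSeq : AcyclicOrientation G → List V → AcyclicOrientation G → Prop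
  | nil (O : AcyclicOrientation G) : ClickSeq O [] O
  | cons {O O' O'' : AcyclicOrientation G} {v : V} {c : List V} :
      O.ClickAt v O' → ClickSeq O' c O'' → ClickSeq O (v :: c) O''

open scoped Classical in
/-- `ν_P(O)`: forward minus backward edges of the closed walk `p` under `O`. -/
noncomputable def nu (O : AcyclicOrientation G) {u : V} (p : G.Walk u u) : ℤ :=
  (p.darts.map (fun d => if O.dir d.toProd.1 d.toProd.2 then (1 : ℤ) else -1)).sum

/-- The `vw`-interval: vertices on a directed path from `v` to `w`. -/
def interval (O : AcyclicOrientation G) (v w : V) : Set V :=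
  {a | Relation.ReflTransGen O.dir v a ∧ Relation.ReflTransGen O.dir a w}

end AcyclicOrientation

open AcyclicOrientation

/-- The setoid of click-equivalence (equivalence relation generated by clicks). -/
def clickSetoid (G : SimpleGraph V) : Setoid (AcyclicOrientation G) :=
  ⟨Relation.EqvGen IsClick, Relation.EqvGen.is_equivalence _⟩

/-- `κ(G)`: the number of click-equivalence classes of acyclic orientations. -/
noncomputable def kappa (G : SimpleGraph V) : ℕ :=
  Nat.card (Quotient (clickSetoid G))

/-- The graph obtained from `G` by contracting the vertex set `I` to the single vertex `vI ∈ I`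
(vertices of `I` other than `vI` become isolated). -/
def contractGraph (G : SimpleGraph V) (I : Set V) (vI : V) : SimpleGraph V where
  Adj a b := a ≠ b ∧
    ((a ∉ I ∧ b ∉ I ∧ G.Adj a b) ∨
     (a = vI ∧ b ∉ I ∧ ∃ x ∈ I, G.Adj x b) ∨
     (b = vI ∧ a ∉ I ∧ ∃ x ∈ I, G.Adj x a))
  symm := by
    refine ⟨?_⟩
    rintro a b ⟨hne, h⟩
    refine ⟨hne.symm, ?_⟩
    rcases h with ⟨ha, hb, hadj⟩ | ⟨ha, hb, x, hx, hadj⟩ | ⟨hb, ha, x, hx, hadj⟩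
    · exact Or.inl ⟨hb, ha, hadj.symm⟩
    · exact Or.inr (Or.inr ⟨ha, hb, x, hx, hadj⟩)
    · exact Or.inr (Or.inl ⟨hb, ha, x, hx, hadj⟩)
  loopless := by refine ⟨?_⟩; rintro a ⟨hne, -⟩; exact hne rfl

/-- The orientation of the contracted graph induced by an orientation `O` of `G`. -/
def contractDir {G : SimpleGraph V} (O : AcyclicOrientation G) (I : Set V) (vI : V) :
    V → V → Prop := fun a b =>
  (a ∉ I ∧ b ∉ I ∧ O.dir a b) ∨
  (a = vI ∧ b ∉ I ∧ ∃ x ∈ I, O.dir x b) ∨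
  (b = vI ∧ a ∉ I ∧ ∃ x ∈ I, O.dir a x)

/-- The orientation `i → j` iff `i` precedes `j` in the list `l`. -/
def permDir (G : SimpleGraph V) [DecidableEq V] (l : List V) : V → V → Prop :=
  fun i j => G.Adj i j ∧ l.idxOf i < l.idxOf j
/-- The orientation `O` with the edge `{v,w}` deleted. -/
def dirDel {G : SimpleGraph V} (O : AcyclicOrientation G) (v w : V) : V → V → Prop :=
  fun a b => O.dir a b ∧ ¬((a = v ∧ b = w) ∨ (a = w ∧ b = v))

/-- Reversing the edge `{v,w}` in `O` keeps the orientation acyclic. -/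
def RevAcyclic {G : SimpleGraph V} (O : AcyclicOrientation G) (v w : V) : Prop :=
  (O.dir v w ∧ ¬ Relation.TransGen (dirDel O v w) v w) ∨
  (O.dir w v ∧ ¬ Relation.TransGen (dirDel O v w) w v)


/-! The restriction `O ↦ O'` forgets only the direction of `e`, and that direction can be read
off `O'`: it is `w → v` if `O'` has a directed path from `w` to `v`, and otherwise `β_e` sends to
`Γ'` only the orientation with `v → w`. If `O` has the arc `w → v` and no other directed path
from `w` to `v`, the contraction `O''` is acyclic: a cycle of `O''` through the merged vertex
lifts to a directed path avoiding `e` from an end of `e` to an end of `e`, which closes up to a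
cycle of `O`, or is the excluded path. Conversely, an acyclic orientation of `Γ/e` pulls back along
`w ↦ v`, with `e` oriented `w → v`. These two constructions invert `β_e`. -/

open Relation

namespace Relation

variable {α β : Type*} {r : α → α → Prop}

theorem transGen_sup_edge {p q a b : α} (h : TransGen (fun x y => r x y ∨ x = p ∧ y = q) a b) :
    TransGen r a b ∨ ReflTransGen r a p ∧ ReflTransGen r q b := by
  induction h with
  | single h =>
    rcases h with h | ⟨rfl, rfl⟩
    · exact .inl (.single h)
    · exact .inr ⟨.refl, .refl⟩
  | tail _ h ih =>
    rcases h with h | ⟨rfl, rfl⟩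
    · exact ih.imp (·.tail h) fun ⟨h₁, h₂⟩ => ⟨h₁, h₂.tail h⟩
    · exact .inr ⟨ih.elim (·.to_reflTransGen) (·.1), .refl⟩

theorem irreflexive_transGen_sup_edge (hr : ∀ a, ¬ TransGen r a a) {p q : α}
    (hqp : ¬ ReflTransGen r q p) : ∀ a, ¬ TransGen (fun x y => r x y ∨ x = p ∧ y = q) a a :=
  fun a h => (transGen_sup_edge h).elim (hr a) fun ⟨h₁, h₂⟩ => hqp (h₂.trans h₁)

/-- A path of the image relation either lifts, or passes through the fiber over `c`, in which
case it lifts up to its first and from its last visit there. -/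
theorem transGen_map_cases {f : α → β} {c : β}
    (hf : ∀ x y, f x = f y → x = y ∨ f x = c) {a b : β}
    (h : TransGen (Relation.Map r f f) a b) :
    (∃ s t, f s = a ∧ f t = b ∧ TransGen r s t) ∨
      (∃ s i, f s = a ∧ f i = c ∧ ReflTransGen r s i) ∧
        ∃ j t, f j = c ∧ f t = b ∧ TransGen r j t := by
  induction h with
  | single h =>
    obtain ⟨s, t, hst, rfl, rfl⟩ := h
    exact .inl ⟨s, t, rfl, rfl, .single hst⟩
  | tail _ h ih =>
    obtain ⟨s', t', hst', hs', rfl⟩ := h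
    rcases ih with ⟨s, t, rfl, ht, hst⟩ | ⟨hleft, j, t, hj, ht, hjt⟩
    · rcases hf t s' (ht.trans hs'.symm) with rfl | htc
      · exact .inl ⟨s, t', rfl, rfl, hst.tail hst'⟩
      · exact .inr ⟨⟨s, t, rfl, htc, hst.to_reflTransGen⟩,
          s', t', hs'.trans (ht.symm.trans htc), rfl, .single hst'⟩
    · rcases hf t s' (ht.trans hs'.symm) with rfl | htc
      · exact .inr ⟨hleft, j, t', hj, rfl, hjt.tail hst'⟩
      · exact .inr ⟨hleft, s', t', hs'.trans (ht.symm.trans htc), rfl, .single hst'⟩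

theorem irreflexive_transGen_map {f : α → β} {c : β}
    (hf : ∀ x y, f x = f y → x = y ∨ f x = c)
    (hr : ∀ x y, f x = f y → ¬ TransGen r x y) :
    ∀ a, ¬ TransGen (Relation.Map r f f) a a := by
  intro a h
  rcases transGen_map_cases hf h with
    ⟨s, t, rfl, hts, hst⟩ | ⟨⟨s, i, rfl, hi, hsi⟩, j, t, hj, hts, hjt⟩
  · exact hr s t hts.symm hst
  · rcases hf t s hts with rfl | htc
    · exact hr j i (hj.trans hi.symm) (hjt.trans_left hsi)
    · exact hr j t (hj.trans htc.symm) hjt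

theorem transGen_image_or_edge {s : β → β → Prop} {f : α → β} {p q : α} (hpq : p ≠ q)
    (hf : f p = f q) (hr : ∀ x y, r x y → x = p ∧ y = q ∨ s (f x) (f y)) {a b : α}
    (h : TransGen r a b) : TransGen s (f a) (f b) ∨ a = p ∧ b = q := by
  induction h with
  | single h => exact (hr _ _ h).symm.imp .single id
  | @tail b c _ hbc ih =>
    left
    rcases hr b c hbc with ⟨rfl, rfl⟩ | hbc
    · rcases ih with ih | ⟨-, h⟩
      · rwa [← hf]
      · exact absurd h hpq
    · rcases ih with ih | ⟨rfl, rfl⟩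
      · exact ih.tail hbc
      · exact .single (hf ▸ hbc)

theorem irreflexive_transGen_of_image_or_edge {s : β → β → Prop} {f : α → β} {p q : α}
    (hpq : p ≠ q) (hf : f p = f q) (hr : ∀ x y, r x y → x = p ∧ y = q ∨ s (f x) (f y))
    (hs : ∀ a, ¬ TransGen s a a) : ∀ a, ¬ TransGen r a a :=
  fun _ h => (transGen_image_or_edge hpq hf hr h).elim (hs _)
    fun ⟨h₁, h₂⟩ => hpq (h₁.symm.trans h₂)

end Relation

theorem SimpleGraph.deleteEdges_singleton_adj {G : SimpleGraph V} {v w a b : V} :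
    (G.deleteEdges {s(v, w)}).Adj a b ↔
      G.Adj a b ∧ ¬ ((a = v ∧ b = w) ∨ (a = w ∧ b = v)) := by
  simp

namespace AcyclicOrientation

variable {G : SimpleGraph V}

theorem ext {O O' : AcyclicOrientation G} (h : ∀ a b, O.dir a b ↔ O'.dir a b) : O = O' := by
  cases O
  cases O'
  congr
  exact funext₂ fun a b => propext (h a b)

instance [Finite V] : Finite (AcyclicOrientation G) :=
  Finite.of_injective dir fun _ _ h => ext fun a b => by rw [h]

theorem not_dir_of_dir (O : AcyclicOrientation G) {a b : V} (h : O.dir a b) : ¬ O.dir b a :=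
  fun h' => O.acyclic a (.tail (.single h) h')

theorem transGen_of_transGen_dirDel (O : AcyclicOrientation G) {v w a b : V}
    (h : TransGen (dirDel O v w) a b) : TransGen O.dir a b :=
  TransGen.mono (fun _ _ h => h.1) _ _ h

/-- Reversing the arc `a → b` of `O` keeps `O` acyclic. -/
def IsReversibleArc (O : AcyclicOrientation G) (a b : V) : Prop :=
  O.dir a b ∧ ¬ TransGen (dirDel O b a) a b

section Deletion

variable {v w : V}

def deleteEdge (O : AcyclicOrientation G) (v w : V) :
    AcyclicOrientation (G.deleteEdges {s(v, w)}) where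
  dir := dirDel O v w
  dir_adj h := SimpleGraph.deleteEdges_singleton_adj.2 ⟨O.dir_adj h.1, h.2⟩
  total h := by
    obtain ⟨hab, hne⟩ := SimpleGraph.deleteEdges_singleton_adj.1 h
    exact (O.total hab).imp (⟨·, hne⟩) (⟨·, by tauto⟩)
  acyclic a h := O.acyclic a (O.transGen_of_transGen_dirDel h)

def addEdge (O₁ : AcyclicOrientation (G.deleteEdges {s(v, w)})) (hvw : G.Adj v w) (p q : V)
    (hpq : s(p, q) = s(v, w)) (hqp : ¬ ReflTransGen O₁.dir q p) : AcyclicOrientation G where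
  dir a b := O₁.dir a b ∨ a = p ∧ b = q
  dir_adj := by
    rintro a b (h | ⟨rfl, rfl⟩)
    · exact (SimpleGraph.deleteEdges_singleton_adj.1 (O₁.dir_adj h)).1
    · rwa [← SimpleGraph.mem_edgeSet, hpq]
  total {a b} hab := by
    by_cases he : s(a, b) = s(p, q)
    · rcases Sym2.eq_iff.1 he with ⟨rfl, rfl⟩ | ⟨rfl, rfl⟩
      exacts [.inl (.inr ⟨rfl, rfl⟩), .inr (.inr ⟨rfl, rfl⟩)]
    · rw [hpq, Sym2.eq_iff] at he
      exact (O₁.total (SimpleGraph.deleteEdges_singleton_adj.2 ⟨hab, he⟩)).imp .inl .inl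
  acyclic := irreflexive_transGen_sup_edge O₁.acyclic hqp

theorem deleteEdge_addEdge (O₁ : AcyclicOrientation (G.deleteEdges {s(v, w)})) (hvw : G.Adj v w)
    {p q : V} (hpq : s(p, q) = s(v, w)) (hqp : ¬ ReflTransGen O₁.dir q p) :
    (O₁.addEdge hvw p q hpq hqp).deleteEdge v w = O₁ := by
  refine ext fun a b =>
    ⟨?_, fun h => ⟨.inl h, (SimpleGraph.deleteEdges_singleton_adj.1 (O₁.dir_adj h)).2⟩⟩
  rintro ⟨h | ⟨rfl, rfl⟩, hne⟩
  exacts [h, absurd (Sym2.eq_iff.1 hpq) hne]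

theorem addEdge_deleteEdge {O : AcyclicOrientation G} (hvw : G.Adj v w) {p q : V}
    (hpq : s(p, q) = s(v, w)) (hqp : ¬ ReflTransGen (dirDel O v w) q p) (h : O.dir p q) :
    (O.deleteEdge v w).addEdge hvw p q hpq hqp = O := by
  refine ext fun a b => ⟨?_, fun hab => ?_⟩
  · rintro (h' | ⟨rfl, rfl⟩)
    exacts [h'.1, h]
  · by_cases he : (a = v ∧ b = w) ∨ (a = w ∧ b = v)
    · rw [← Sym2.eq_iff, ← hpq, Sym2.eq_iff] at he
      rcases he with he | ⟨rfl, rfl⟩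
      exacts [.inr he, absurd hab (O.not_dir_of_dir h)]
    · exact .inl ⟨hab, he⟩

open Classical in
/-- The preimage of `O₁` under `β_e`: `e` is oriented `w → v` exactly when `O₁` has a
directed path from `w` to `v`. -/
noncomputable def insertEdge (O₁ : AcyclicOrientation (G.deleteEdges {s(v, w)}))
    (hvw : G.Adj v w) : AcyclicOrientation G :=
  if h : TransGen O₁.dir w v then
    O₁.addEdge hvw w v Sym2.eq_swap fun h' =>
      (reflTransGen_iff_eq_or_transGen.1 h').elim (hvw.ne ·.symm) (O₁.acyclic w <| h.trans ·)
  else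
    O₁.addEdge hvw v w rfl fun h' =>
      (reflTransGen_iff_eq_or_transGen.1 h').elim hvw.ne h

theorem deleteEdge_insertEdge (O₁ : AcyclicOrientation (G.deleteEdges {s(v, w)}))
    (hvw : G.Adj v w) : (O₁.insertEdge hvw).deleteEdge v w = O₁ := by
  unfold insertEdge
  split_ifs <;> exact deleteEdge_addEdge ..

theorem insertEdge_deleteEdge {O : AcyclicOrientation G} (hvw : G.Adj v w)
    (h : ¬ O.IsReversibleArc w v) : (O.deleteEdge v w).insertEdge hvw = O := by
  unfold insertEdge
  split_ifs with hwv
  · refine addEdge_deleteEdge _ _ _ ((O.total hvw).resolve_left fun hvw' => ?_)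
    exact O.acyclic v (.head hvw' (O.transGen_of_transGen_dirDel hwv))
  · exact addEdge_deleteEdge _ _ _ ((O.total hvw).resolve_right fun hwv' => h ⟨hwv', hwv⟩)

theorem not_isReversibleArc_insertEdge (O₁ : AcyclicOrientation (G.deleteEdges {s(v, w)}))
    (hvw : G.Adj v w) : ¬ (O₁.insertEdge hvw).IsReversibleArc w v := by
  rintro ⟨hwv, hpath⟩
  have hdel : dirDel (O₁.insertEdge hvw) v w = O₁.dir :=
    congrArg dir (deleteEdge_insertEdge O₁ hvw)
  rw [hdel] at hpath
  rw [insertEdge, dif_neg hpath] at hwv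
  rcases hwv with h | ⟨h, -⟩
  exacts [hpath (.single h), hvw.ne h.symm]

end Deletion

end AcyclicOrientation

/-- The vertex map `Γ → Γ/e` of `contractGraph G {v, w} v`. -/
def collapse [DecidableEq V] (v w x : V) : V := if x = w then v else x

section Collapse

variable [DecidableEq V] {v w : V}

theorem collapse_eq_left_iff {x : V} : collapse v w x = v ↔ x = v ∨ x = w := by
  unfold collapse
  split_ifs <;> tauto

theorem collapse_eq_collapse_iff {x y : V} :
    collapse v w x = collapse v w y ↔ x = y ∨ (x = v ∨ x = w) ∧ (y = v ∨ y = w) := by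
  unfold collapse
  split_ifs <;> grind

theorem collapse_eq_collapse_iff_of_ne {x y : V} (hxy : x ≠ y) :
    collapse v w x = collapse v w y ↔ (x = v ∧ y = w) ∨ (x = w ∧ y = v) := by
  unfold collapse
  split_ifs <;> grind

variable {G : SimpleGraph V}

theorem contractGraph_adj_iff {a b : V} : (contractGraph G {v, w} v).Adj a b ↔
    a ≠ b ∧ Relation.Map G.Adj (collapse v w) (collapse v w) a b := by
  have hsymm : ∀ x y, G.Adj x y → G.Adj y x := fun _ _ h => h.symm
  simp only [contractGraph, Relation.Map, collapse, Set.mem_insert_iff, Set.mem_singleton_iff]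
  grind

theorem contractDir_iff_map (O : AcyclicOrientation G) {a b : V} :
    contractDir O {v, w} v a b ↔
      Relation.Map (dirDel O v w) (collapse v w) (collapse v w) a b := by
  have hne : ∀ s t, O.dir s t → s ≠ t := fun s t h => (O.dir_adj h).ne
  simp only [contractDir, Relation.Map, dirDel, collapse, Set.mem_insert_iff,
    Set.mem_singleton_iff]
  grind

end Collapse

namespace AcyclicOrientation

variable {G : SimpleGraph V} {v w : V}

theorem irreflexive_transGen_map_dirDel [DecidableEq V] {O : AcyclicOrientation G}
    (h : O.IsReversibleArc w v) :
    ∀ a, ¬ TransGen (Relation.Map (dirDel O v w) (collapse v w) (collapse v w)) a a := by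
  refine irreflexive_transGen_map (c := v)
    (fun x y hxy => (collapse_eq_collapse_iff.1 hxy).imp_right fun h => collapse_eq_left_iff.2 h.1)
    fun x y hxy hxy' => ?_
  rcases collapse_eq_collapse_iff.1 hxy with rfl | ⟨rfl | rfl, rfl | rfl⟩
  · exact O.acyclic _ (O.transGen_of_transGen_dirDel hxy')
  · exact O.acyclic _ (O.transGen_of_transGen_dirDel hxy')
  · exact O.acyclic _ ((O.transGen_of_transGen_dirDel hxy').tail h.1)
  · exact h.2 hxy'
  · exact O.acyclic _ (O.transGen_of_transGen_dirDel hxy')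

def contractEdge (O : AcyclicOrientation G) (h : O.IsReversibleArc w v) :
    AcyclicOrientation (contractGraph G {v, w} v) where
  dir := contractDir O {v, w} v
  dir_adj hab := by
    classical
    obtain ⟨s, t, hst, rfl, rfl⟩ := (contractDir_iff_map O).1 hab
    refine contractGraph_adj_iff.2 ⟨fun he => ?_, s, t, O.dir_adj hst.1, rfl, rfl⟩
    exact irreflexive_transGen_map_dirDel h _ (.single ⟨s, t, hst, rfl, he.symm⟩)
  total hab := by
    classical
    obtain ⟨hne, s, t, hst, rfl, rfl⟩ := contractGraph_adj_iff.1 hab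
    have he : ¬ ((s = v ∧ t = w) ∨ (s = w ∧ t = v)) :=
      mt (collapse_eq_collapse_iff_of_ne hst.ne).2 hne
    simp only [contractDir_iff_map]
    exact (O.total hst).imp (⟨s, t, ⟨·, he⟩, rfl, rfl⟩)
      (⟨t, s, ⟨·, by tauto⟩, rfl, rfl⟩)
  acyclic a hcyc := by
    classical
    exact irreflexive_transGen_map_dirDel h a
      (TransGen.mono (fun _ _ => (contractDir_iff_map O).1) _ _ hcyc)

section Lift

variable [DecidableEq V]

def liftContract (O₂ : AcyclicOrientation (contractGraph G {v, w} v)) (hvw : G.Adj v w) :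
    AcyclicOrientation G where
  dir a b := a = w ∧ b = v ∨ G.Adj a b ∧ O₂.dir (collapse v w a) (collapse v w b)
  dir_adj := by
    rintro a b (⟨rfl, rfl⟩ | ⟨h, -⟩)
    exacts [hvw.symm, h]
  total {a b} hab := by
    by_cases he : (a = v ∧ b = w) ∨ (a = w ∧ b = v)
    · rcases he with ⟨rfl, rfl⟩ | ⟨rfl, rfl⟩
      exacts [.inr (.inl ⟨rfl, rfl⟩), .inl (.inl ⟨rfl, rfl⟩)]
    · have hne : collapse v w a ≠ collapse v w b :=
        mt (collapse_eq_collapse_iff_of_ne hab.ne).1 he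
      exact (O₂.total (contractGraph_adj_iff.2 ⟨hne, a, b, hab, rfl, rfl⟩)).imp
        (.inr ⟨hab, ·⟩) (.inr ⟨hab.symm, ·⟩)
  acyclic := irreflexive_transGen_of_image_or_edge hvw.ne.symm
    (collapse_eq_collapse_iff.2 (.inr ⟨.inr rfl, .inl rfl⟩)) (fun _ _ h => h.imp_right (·.2))
    O₂.acyclic

theorem isReversibleArc_liftContract (O₂ : AcyclicOrientation (contractGraph G {v, w} v))
    (hvw : G.Adj v w) : (O₂.liftContract hvw).IsReversibleArc w v := by
  refine ⟨.inl ⟨rfl, rfl⟩, fun hwv => O₂.acyclic v ?_⟩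
  have hvv : TransGen O₂.dir (collapse v w w) (collapse v w v) :=
    TransGen.lift (collapse v w) (fun a b h => ?_) _ _ hwv
  · rwa [collapse_eq_left_iff.2 (.inr rfl), collapse_eq_left_iff.2 (.inl rfl)] at hvv
  · exact (h.1.resolve_left fun h' => h.2 (.inr h')).2

theorem contractEdge_liftContract (O₂ : AcyclicOrientation (contractGraph G {v, w} v))
    (hvw : G.Adj v w) :
    (O₂.liftContract hvw).contractEdge (isReversibleArc_liftContract O₂ hvw) = O₂ := by
  refine ext fun a b => (contractDir_iff_map _).trans ⟨?_, fun h => ?_⟩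
  · rintro ⟨s, t, ⟨hst, hne⟩, rfl, rfl⟩
    exact (hst.resolve_left fun h' => hne (.inr h')).2
  · obtain ⟨hne, s, t, hst, rfl, rfl⟩ := contractGraph_adj_iff.1 (O₂.dir_adj h)
    have he := mt (collapse_eq_collapse_iff_of_ne hst.ne).2 hne
    exact ⟨s, t, ⟨.inr ⟨hst, h⟩, he⟩, rfl, rfl⟩

theorem liftContract_contractEdge {O : AcyclicOrientation G} (hvw : G.Adj v w)
    (h : O.IsReversibleArc w v) : (O.contractEdge h).liftContract hvw = O := by
  have hmap := irreflexive_transGen_map_dirDel h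
  refine ext fun a b => ⟨?_, fun hab => ?_⟩
  · rintro (⟨rfl, rfl⟩ | ⟨hab, hm⟩)
    · exact h.1
    · replace hm := (contractDir_iff_map O).1 hm
      by_contra hab'
      by_cases he : (a = v ∧ b = w) ∨ (a = w ∧ b = v)
      · rw [(collapse_eq_collapse_iff_of_ne hab.ne).2 he] at hm
        exact hmap _ (.single hm)
      · have hba : dirDel O v w b a := ⟨(O.total hab).resolve_left hab', by tauto⟩
        exact hmap _ (.tail (.single hm) ⟨b, a, hba, rfl, rfl⟩)
  · by_cases hwv : a = w ∧ b = v
    · exact .inl hwv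
    · refine .inr ⟨O.dir_adj hab,
        (contractDir_iff_map O).2 ⟨a, b, ⟨hab, ?_⟩, rfl, rfl⟩⟩
      rintro (⟨rfl, rfl⟩ | hwv')
      exacts [O.not_dir_of_dir h.1 hab, hwv hwv']

end Lift

open Classical in
/-- The map `β_e`. -/
noncomputable def beta (v w : V) (O : AcyclicOrientation G) :
    AcyclicOrientation (G.deleteEdges {s(v, w)}) ⊕
      AcyclicOrientation (contractGraph G {v, w} v) :=
  if h : O.IsReversibleArc w v then .inr (O.contractEdge h) else .inl (O.deleteEdge v w)

theorem beta_of_isReversibleArc {O : AcyclicOrientation G} {v w : V} (h : O.IsReversibleArc w v) :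
    beta v w O = .inr (O.contractEdge h) := dif_pos h

theorem beta_of_not_isReversibleArc {O : AcyclicOrientation G} {v w : V}
    (h : ¬ O.IsReversibleArc w v) : beta v w O = .inl (O.deleteEdge v w) := dif_neg h

theorem beta_bijective [DecidableEq V] {v w : V} (hvw : G.Adj v w) :
    Function.Bijective (beta (G := G) v w) := by
  refine Function.bijective_iff_has_inverse.2
    ⟨Sum.elim (insertEdge · hvw) (liftContract · hvw), fun O => ?_, ?_⟩
  · by_cases h : O.IsReversibleArc w v
    · rw [beta_of_isReversibleArc h]
      exact liftContract_contractEdge hvw h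
    · rw [beta_of_not_isReversibleArc h]
      exact insertEdge_deleteEdge hvw h
  · rintro (O₁ | O₂)
    · rw [Sum.elim_inl, beta_of_not_isReversibleArc (not_isReversibleArc_insertEdge O₁ hvw),
        deleteEdge_insertEdge]
    · rw [Sum.elim_inr, beta_of_isReversibleArc (isReversibleArc_liftContract O₂ hvw),
        contractEdge_liftContract]

end AcyclicOrientation

/-- The map `β_e` is a bijection `Acyc(Γ) → Acyc(Γ') ⊔ Acyc(Γ'')`; in particular
`α(Γ) = α(Γ') + α(Γ'')`. -/
theorem beta_bijection [Fintype V] [DecidableEq V] (G : SimpleGraph V) (v w : V)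
    (hvw : G.Adj v w) :
    ∃ f : AcyclicOrientation G →
        (AcyclicOrientation (G.deleteEdges {s(v, w)}) ⊕
          AcyclicOrientation (contractGraph G {v, w} v)),
      Function.Bijective f ∧
      (∀ O : AcyclicOrientation G,
        ((¬ RevAcyclic O v w ∨ O.dir v w) →
          ∃ O₁, f O = Sum.inl O₁ ∧ ∀ a b, O₁.dir a b ↔ dirDel O v w a b) ∧
        ((RevAcyclic O v w ∧ O.dir w v) →
          ∃ O₂, f O = Sum.inr O₂ ∧ ∀ a b, O₂.dir a b ↔ contractDir O {v, w} v a b)) ∧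
      Nat.card (AcyclicOrientation G) =
        Nat.card (AcyclicOrientation (G.deleteEdges {s(v, w)})) +
          Nat.card (AcyclicOrientation (contractGraph G {v, w} v)) := by
  have hbij := beta_bijective hvw
  refine ⟨beta v w, hbij, fun O => ⟨fun h => ?_, fun h => ?_⟩, ?_⟩
  · have hO : ¬ O.IsReversibleArc w v := fun hr =>
      h.elim (· (Or.inr hr)) (O.not_dir_of_dir · hr.1)
    exact ⟨_, beta_of_not_isReversibleArc hO, fun _ _ => Iff.rfl⟩
  · have hO : O.IsReversibleArc w v := h.1.resolve_left fun hr => O.not_dir_of_dir hr.1 h.2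
    exact ⟨_, beta_of_isReversibleArc hO, fun _ _ => Iff.rfl⟩
  · rw [Nat.card_eq_of_bijective _ hbij, Nat.card_sum]
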